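/- Let g₀ (supported on exactly J points) and g be probability measures on a bounded set Θ ⊆ ℝ^d with ‖θ−θ₀‖ ≤ M for all θ ∈ Θ. Define Δ_g := max_{1≤k≤2J} ‖m_{k,g} − m_{k,g₀}‖₂ where ‖·‖₂ is the tensor spectral norm and m_{k,g} := ∫ (θ−θ₀)^{⊗k} dg(θ). Assuming Banach's theorem that the spectral norm of a symmetric tensor equals sup_{c ∈ S^{d−1}} |⟨T, c^{⊗k}⟩|, one has for every k > 2J: ‖m_{k,g} − m_{k,g₀}‖₂ ≤ k (M+1)^{2Jk} Δ_g. -/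

import Mathlib

/-!
Projecting onto a unit direction `c` turns the tensor moments into the moments of the real
variable `φ = ⟨θ - θ₀, c⟩`, which under `g₀` takes at most `J` values, all in `[-M, M]`. The
polynomial `P = ∏ₜ (X - t)²` over these values has degree at most `2J`, is nonnegative and vanishes
`g₀`-a.e. on `φ`, so `∫ φʳ P(φ) dg` equals a combination of moment differences of orders
`r, …, r + 2J` with leading coefficient `1`, and is at most `Mʳ ∫ P(φ) dg ≤ Mʳ (M + 1)^{2J} Δ`
in absolute value. This is a linear recurrence bounding each moment difference of order `> 2J`
by the `2J` preceding ones, and induction bounds the `n`-th one by `n (M + 1)^{2Jn} Δ`.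
-/

open MeasureTheory ProbabilityTheory Polynomial Finset

namespace Polynomial

theorem abs_coeff_mul_le {p q p' q' : ℝ[X]} (hp : ∀ j, |p.coeff j| ≤ p'.coeff j)
    (hq : ∀ j, |q.coeff j| ≤ q'.coeff j) (j : ℕ) : |(p * q).coeff j| ≤ (p' * q').coeff j := by
  rw [coeff_mul, coeff_mul]
  refine (abs_sum_le_sum_abs _ _).trans (sum_le_sum fun x _ => ?_)
  rw [abs_mul]
  exact mul_le_mul (hp _) (hq _) (abs_nonneg _) ((abs_nonneg _).trans (hp _))

theorem abs_coeff_X_sub_C_le (a : ℝ) (j : ℕ) : |(X - C a).coeff j| ≤ (X + C |a|).coeff j := by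
  rcases j with _ | _ | j <;> simp [coeff_X, coeff_C]

theorem sum_range_abs_coeff_le_eval_one {p q : ℝ[X]} (h : ∀ j, |p.coeff j| ≤ q.coeff j)
    (n : ℕ) : ∑ j ∈ range n, |p.coeff j| ≤ q.eval 1 := by
  rw [eval_eq_sum_range' (n := max n (q.natDegree + 1)) (by omega)]
  simp only [one_pow, mul_one]
  calc ∑ j ∈ range n, |p.coeff j| ≤ ∑ j ∈ range n, q.coeff j := sum_le_sum fun j _ => h j
    _ ≤ _ := sum_le_sum_of_subset_of_nonneg (range_subset_range.2 (le_max_left _ _))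
        fun j _ _ => (abs_nonneg _).trans (h j)

noncomputable def sqVanishingPoly (T : Finset ℝ) : ℝ[X] := ∏ t ∈ T, (X - C t) ^ 2

section sqVanishingPoly

variable (T : Finset ℝ)

theorem monic_sqVanishingPoly : (sqVanishingPoly T).Monic :=
  monic_prod_of_monic _ _ fun t _ => (monic_X_sub_C t).pow 2

theorem natDegree_sqVanishingPoly : (sqVanishingPoly T).natDegree = 2 * #T := by
  rw [sqVanishingPoly, natDegree_prod_of_monic _ _ fun t _ => (monic_X_sub_C t).pow 2]
  simp [mul_comm]

theorem eval_sqVanishingPoly_nonneg (x : ℝ) : 0 ≤ (sqVanishingPoly T).eval x := by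
  rw [sqVanishingPoly, eval_prod]
  exact prod_nonneg fun t _ => by simp [sq_nonneg]

theorem eval_sqVanishingPoly_eq_zero {x : ℝ} (hx : x ∈ T) : (sqVanishingPoly T).eval x = 0 := by
  rw [sqVanishingPoly, eval_prod]
  exact prod_eq_zero hx (by simp)

theorem abs_coeff_sqVanishingPoly_le (j : ℕ) :
    |(sqVanishingPoly T).coeff j| ≤ (∏ t ∈ T, (X + C |t|) ^ 2).coeff j := by
  induction T using Finset.induction_on generalizing j with
  | empty => simp only [sqVanishingPoly, prod_empty, coeff_one]; split_ifs <;> simp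
  | insert a T ha ih =>
    rw [sqVanishingPoly, prod_insert ha, prod_insert ha, sq, sq]
    exact abs_coeff_mul_le (abs_coeff_mul_le (abs_coeff_X_sub_C_le a) (abs_coeff_X_sub_C_le a))
      ih j

theorem sum_range_abs_coeff_sqVanishingPoly_le {M : ℝ} (hT : ∀ t ∈ T, |t| ≤ M) (n : ℕ) :
    ∑ j ∈ range n, |(sqVanishingPoly T).coeff j| ≤ (M + 1) ^ (2 * #T) :=
  calc ∑ j ∈ range n, |(sqVanishingPoly T).coeff j|
      ≤ (∏ t ∈ T, (X + C |t|) ^ 2).eval 1 :=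
        sum_range_abs_coeff_le_eval_one (abs_coeff_sqVanishingPoly_le T) n
    _ = ∏ t ∈ T, (1 + |t|) ^ 2 := by simp [eval_prod]
    _ ≤ ∏ _t ∈ T, (M + 1) ^ 2 :=
        prod_le_prod (fun _ _ => by positivity) fun t ht => by nlinarith [abs_nonneg t, hT t ht]
    _ = (M + 1) ^ (2 * #T) := by rw [prod_const, ← pow_mul, mul_comm]

end sqVanishingPoly

end Polynomial

theorem abs_le_of_linear_recurrence {D p : ℕ → ℝ} {m : ℕ} (hm : 1 ≤ m) {B Δ : ℝ} (hB : 1 ≤ B)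
    (hp : ∑ j ∈ range m, |p j| ≤ B) (hsmall : ∀ n, 1 ≤ n → n ≤ m → |D n| ≤ Δ)
    (hrec : ∀ r, 1 ≤ r → |D (r + m) + ∑ j ∈ range m, p j * D (r + j)| ≤ B ^ (r + 1) * Δ)
    (n : ℕ) (hn : 1 ≤ n) : |D n| ≤ n * B ^ n * Δ := by
  have hΔ : 0 ≤ Δ := (abs_nonneg _).trans (hsmall 1 le_rfl hm)
  induction n using Nat.strong_induction_on with
  | _ n ih =>
  rcases le_or_gt n m with hnm | hmn
  · calc |D n| ≤ Δ := hsmall n hn hnm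
      _ ≤ n * B ^ n * Δ := le_mul_of_one_le_left hΔ
          (one_le_mul_of_one_le_of_one_le (by exact_mod_cast hn) (one_le_pow₀ hB))
  obtain ⟨r, rfl⟩ : ∃ r, n = r + 1 + m := ⟨n - m - 1, by omega⟩
  have htail : ∀ j ∈ range m, |p j * D (r + 1 + j)| ≤ |p j| * ((r + m) * B ^ (r + m) * Δ) := by
    intro j hj
    have hj : j < m := mem_range.1 hj
    rw [abs_mul]
    gcongr
    calc |D (r + 1 + j)| ≤ (r + 1 + j : ℕ) * B ^ (r + 1 + j) * Δ := ih _ (by omega) (by omega)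
      _ ≤ (r + m : ℕ) * B ^ (r + m) * Δ := by
          have hle : r + 1 + j ≤ r + m := by omega
          gcongr ?_ * ?_ * Δ
          · exact_mod_cast hle
          · exact pow_le_pow_right₀ hB hle
      _ = (r + m) * B ^ (r + m) * Δ := by push_cast; ring
  set s := ∑ j ∈ range m, p j * D (r + 1 + j)
  calc |D (r + 1 + m)| ≤ |D (r + 1 + m) + s| + |s| := by simpa using abs_sub (D (r + 1 + m) + s) s
    _ ≤ B ^ (r + 1 + 1) * Δ + ∑ j ∈ range m, |p j| * ((r + m) * B ^ (r + m) * Δ) :=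
        add_le_add (hrec (r + 1) (by omega)) ((abs_sum_le_sum_abs _ _).trans (sum_le_sum htail))
    _ ≤ B ^ (r + 1 + m) * Δ + B * ((r + m) * B ^ (r + m) * Δ) := by
        rw [← sum_mul]
        gcongr
    _ = (r + 1 + m : ℕ) * B ^ (r + 1 + m) * Δ := by push_cast; ring

section Moments

variable {α : Type*} [MeasurableSpace α] {μ : Measure α} {φ : α → ℝ} {M : ℝ}

theorem integrable_pow_of_ae_abs_le [IsFiniteMeasure μ] (hφ : AEStronglyMeasurable φ μ)
    (hM : ∀ᵐ x ∂μ, |φ x| ≤ M) (n : ℕ) : Integrable (fun x => φ x ^ n) μ :=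
  .of_bound (hφ.pow n) (M ^ n) <| hM.mono fun x hx => by
    rw [norm_pow, Real.norm_eq_abs]
    exact pow_le_pow_left₀ (abs_nonneg _) hx n

theorem integrable_pow_mul_eval (hint : ∀ n, Integrable (fun x => φ x ^ n) μ) (P : ℝ[X])
    (r : ℕ) : Integrable (fun x => φ x ^ r * P.eval (φ x)) μ := by
  simp_rw [eval_eq_sum_range, mul_sum, mul_left_comm _ (P.coeff _), ← pow_add]
  exact integrable_finsetSum _ fun j _ => (hint _).const_mul _

theorem integral_pow_mul_eval (hint : ∀ n, Integrable (fun x => φ x ^ n) μ) (P : ℝ[X])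
    (r : ℕ) : ∫ x, φ x ^ r * P.eval (φ x) ∂μ
      = ∑ j ∈ range (P.natDegree + 1), P.coeff j * moment φ (r + j) μ := by
  simp_rw [eval_eq_sum_range, mul_sum, mul_left_comm _ (P.coeff _), ← pow_add]
  rw [integral_finsetSum _ fun j _ => (hint _).const_mul _]
  simp_rw [integral_const_mul, moment, Pi.pow_apply]

theorem abs_integral_pow_mul_le {ψ : α → ℝ} (hM : ∀ᵐ x ∂μ, |φ x| ≤ M) (hψ : 0 ≤ ψ)
    (hψint : Integrable ψ μ) (r : ℕ) :
    |∫ x, φ x ^ r * ψ x ∂μ| ≤ M ^ r * ∫ x, ψ x ∂μ := by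
  rw [← integral_const_mul]
  refine (abs_integral_le_integral_abs).trans (integral_mono_of_nonneg
    (.of_forall fun x => abs_nonneg _) (hψint.const_mul _) (hM.mono fun x hx => ?_))
  dsimp only
  rw [abs_mul, abs_pow, abs_of_nonneg (hψ x)]
  exact mul_le_mul_of_nonneg_right (pow_le_pow_left₀ (abs_nonneg _) hx r) (hψ x)

theorem abs_moment_le [IsProbabilityMeasure μ] (hM : ∀ᵐ x ∂μ, |φ x| ≤ M) (n : ℕ) :
    |moment φ n μ| ≤ M ^ n := by
  simpa [moment] using norm_integral_le_of_norm_le_const (μ := μ) (f := φ ^ n) <|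
    hM.mono fun x hx => by
      rw [Pi.pow_apply, norm_pow, Real.norm_eq_abs]
      exact pow_le_pow_left₀ (abs_nonneg _) hx n

end Moments

theorem abs_moment_sub_le_of_ae_mem_finset {α : Type*} [MeasurableSpace α] {g g₀ : Measure α}
    [IsProbabilityMeasure g] [IsProbabilityMeasure g₀] {φ : α → ℝ} (hφ : Measurable φ) {M : ℝ}
    (hφg : ∀ᵐ x ∂g, |φ x| ≤ M) {T : Finset ℝ} (hT : T.Nonempty) (hTM : ∀ t ∈ T, |t| ≤ M)
    (hφg₀ : ∀ᵐ x ∂g₀, φ x ∈ T) {Δ : ℝ}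
    (hΔ : ∀ n, 1 ≤ n → n ≤ 2 * #T → |moment φ n g - moment φ n g₀| ≤ Δ) (n : ℕ) (hn : 1 ≤ n) :
    |moment φ n g - moment φ n g₀| ≤ n * (M + 1) ^ (2 * #T * n) * Δ := by
  set P := sqVanishingPoly T
  set D := fun j => moment φ j g - moment φ j g₀
  set B := (M + 1) ^ (2 * #T)
  have hm : 1 ≤ 2 * #T := by have := hT.card_pos; omega
  have hM : 0 ≤ M := (abs_nonneg _).trans (hTM _ hT.choose_spec)
  have hMB : M ≤ B :=
    calc M ≤ M + 1 := by linarith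
      _ ≤ B := le_self_pow₀ (by linarith) (by omega)
  have hΔ0 : 0 ≤ Δ := (abs_nonneg _).trans (hΔ 1 le_rfl hm)
  have hintg := integrable_pow_of_ae_abs_le hφ.aestronglyMeasurable hφg
  have hintg₀ :=
    integrable_pow_of_ae_abs_le hφ.aestronglyMeasurable (hφg₀.mono fun x hx => hTM _ hx)
  have hcomb (r : ℕ) :
      ∫ x, φ x ^ r * P.eval (φ x) ∂g = ∑ j ∈ range (2 * #T + 1), P.coeff j * D (r + j) := by
    have h₀ : ∫ x, φ x ^ r * P.eval (φ x) ∂g₀ = 0 :=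
      integral_eq_zero_of_ae (hφg₀.mono fun x hx => by simp [P, eval_sqVanishingPoly_eq_zero T hx])
    rw [← sub_zero (∫ x, _ ∂g), ← h₀, integral_pow_mul_eval hintg, integral_pow_mul_eval hintg₀,
      natDegree_sqVanishingPoly, ← sum_sub_distrib]
    simp_rw [D, mul_sub]
  have hD : ∀ j ∈ range (2 * #T + 1), |D j| ≤ Δ := by
    intro j hj
    rcases Nat.eq_zero_or_pos j with rfl | hj0
    · simpa [D, moment] using hΔ0
    · exact hΔ j hj0 (Nat.lt_succ_iff.1 (mem_range.1 hj))
  have hmass : ∫ x, P.eval (φ x) ∂g ≤ B * Δ := by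
    have hcomb₀ := hcomb 0
    simp only [pow_zero, one_mul, zero_add] at hcomb₀
    rw [hcomb₀]
    calc ∑ j ∈ range (2 * #T + 1), P.coeff j * D j
        ≤ ∑ j ∈ range (2 * #T + 1), |P.coeff j| * Δ := sum_le_sum fun j hj =>
          (le_abs_self _).trans ((abs_mul _ _).trans_le (by gcongr; exact hD j hj))
      _ ≤ B * Δ := by
          rw [← sum_mul]
          exact mul_le_mul_of_nonneg_right (sum_range_abs_coeff_sqVanishingPoly_le T hTM _) hΔ0
  have hrec (r : ℕ) (_ : 1 ≤ r) :
      |D (r + 2 * #T) + ∑ j ∈ range (2 * #T), P.coeff j * D (r + j)| ≤ B ^ (r + 1) * Δ := by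
    have hlead : P.coeff (2 * #T) = 1 := by
      simpa [natDegree_sqVanishingPoly] using (monic_sqVanishingPoly T).coeff_natDegree
    rw [add_comm, ← one_mul (D _), ← hlead, ← sum_range_succ, ← hcomb]
    calc _ ≤ M ^ r * ∫ x, P.eval (φ x) ∂g :=
          abs_integral_pow_mul_le hφg (fun x => eval_sqVanishingPoly_nonneg T _)
            (by simpa using integrable_pow_mul_eval hintg P 0) r
      _ ≤ B ^ r * (B * Δ) := by
          have : 0 ≤ ∫ x, P.eval (φ x) ∂g :=
            integral_nonneg fun x => eval_sqVanishingPoly_nonneg T _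
          gcongr
      _ = B ^ (r + 1) * Δ := by ring
  have := abs_le_of_linear_recurrence hm (one_le_pow₀ (by linarith))
    (sum_range_abs_coeff_sqVanishingPoly_le T hTM _) hΔ hrec n hn
  rwa [← pow_mul] at this

section Projection

variable {α ι : Type*} [MeasurableSpace α] [Fintype ι]

theorem abs_apply_le_sqrt_sum_sq (x : ι → ℝ) (l : ι) : |x l| ≤ √(∑ i, x i ^ 2) :=
  Real.abs_le_sqrt (single_le_sum (fun i _ => sq_nonneg (x i)) (mem_univ l))

theorem abs_sum_mul_le_sqrt_sum_sq (x c : ι → ℝ) (hc : ∑ i, c i ^ 2 = 1) :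
    |∑ i, x i * c i| ≤ √(∑ i, x i ^ 2) :=
  Real.abs_le_sqrt (by simpa [hc] using sum_mul_sq_le_sq_mul_sq univ x c)

theorem sum_integral_prod_mul_prod_eq_integral_pow {μ : Measure α} (v : α → ι → ℝ) (c : ι → ℝ)
    (n : ℕ) (hint : ∀ i : Fin n → ι, Integrable (fun x => ∏ j, v x (i j)) μ) :
    ∑ i : Fin n → ι, (∫ x, ∏ j, v x (i j) ∂μ) * ∏ j, c (i j)
      = ∫ x, (∑ l, v x l * c l) ^ n ∂μ := by
  simp_rw [← integral_mul_const]
  rw [← integral_finsetSum _ fun i _ => (hint i).mul_const _]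
  simp_rw [Fintype.sum_pow, prod_mul_distrib]

theorem sum_integral_centered_prod_mul_prod_eq_moment {μ : Measure (ι → ℝ)} [IsFiniteMeasure μ]
    {θ₀ : ι → ℝ} {M : ℝ} (hM : ∀ᵐ θ ∂μ, √(∑ l, (θ l - θ₀ l) ^ 2) ≤ M) (c : ι → ℝ) (n : ℕ) :
    ∑ i : Fin n → ι, (∫ θ, ∏ j, (θ (i j) - θ₀ (i j)) ∂μ) * ∏ j, c (i j)
      = moment (fun θ => ∑ l, (θ l - θ₀ l) * c l) n μ := by
  rw [sum_integral_prod_mul_prod_eq_integral_pow (fun (θ : ι → ℝ) l => θ l - θ₀ l) c n fun i => ?_]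
  · rfl
  refine .of_bound (Measurable.aestronglyMeasurable (by fun_prop)) (M ^ n) (hM.mono fun θ hθ => ?_)
  rw [Real.norm_eq_abs, abs_prod]
  calc ∏ j, |θ (i j) - θ₀ (i j)| ≤ ∏ _j : Fin n, M := prod_le_prod (fun _ _ => abs_nonneg _)
        fun j _ => (abs_apply_le_sqrt_sum_sq (θ - θ₀) (i j)).trans hθ
    _ = M ^ n := by simp

end Projection

theorem abs_moment_proj_sub_le {ι : Type*} [Fintype ι] {Θ : Set (ι → ℝ)}
    {θ₀ : ι → ℝ} {M : ℝ} (hΘ : ∀ θ ∈ Θ, √(∑ l, (θ l - θ₀ l) ^ 2) ≤ M) {S : Finset (ι → ℝ)}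
    (hS : S.Nonempty) (hSΘ : ↑S ⊆ Θ) {J : ℕ} (hSJ : #S ≤ J) {g g₀ : Measure (ι → ℝ)}
    [IsProbabilityMeasure g] [IsProbabilityMeasure g₀] (hg : ∀ᵐ θ ∂g, θ ∈ Θ)
    (hg₀ : ∀ᵐ θ ∂g₀, θ ∈ S) {c : ι → ℝ} (hc : ∑ l, c l ^ 2 = 1) {Δ : ℝ}
    (hΔ : ∀ n, 1 ≤ n → n ≤ 2 * J → |moment (fun θ => ∑ l, (θ l - θ₀ l) * c l) n g
      - moment (fun θ => ∑ l, (θ l - θ₀ l) * c l) n g₀| ≤ Δ) (k : ℕ) (hk : 1 ≤ k) :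
    |moment (fun θ => ∑ l, (θ l - θ₀ l) * c l) k g - moment (fun θ => ∑ l, (θ l - θ₀ l) * c l) k g₀|
      ≤ k * (M + 1) ^ (2 * J * k) * Δ := by
  set φ := fun θ : ι → ℝ => ∑ l, (θ l - θ₀ l) * c l
  have hφ {θ} (hθ : θ ∈ Θ) : |φ θ| ≤ M := (abs_sum_mul_le_sqrt_sum_sq _ c hc).trans (hΘ θ hθ)
  have hM : 0 ≤ M := (abs_nonneg _).trans (hφ (hSΘ hS.choose_spec))
  have hT : #(S.image φ) ≤ J := card_image_le.trans hSJ
  have hΔ0 : 0 ≤ Δ := (abs_nonneg _).trans (hΔ 1 le_rfl (by have := hS.card_pos; omega))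
  calc _ ≤ k * (M + 1) ^ (2 * #(S.image φ) * k) * Δ :=
        abs_moment_sub_le_of_ae_mem_finset (by fun_prop) (hg.mono fun θ => hφ) (hS.image _)
          (by simpa using fun s hs => hφ (hSΘ hs)) (hg₀.mono fun θ => mem_image_of_mem _)
          (fun n h1 h2 => hΔ n h1 (h2.trans (by omega))) k hk
    _ ≤ _ := by gcongr; linarith

theorem stmt_16 (d : ℕ) (Θ : Set (Fin d → ℝ)) (θ₀ : Fin d → ℝ) (M : ℝ)
    (hΘ : ∀ θ ∈ Θ, Real.sqrt (∑ l, (θ l - θ₀ l) ^ 2) ≤ M)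
    (J : ℕ) (hJ : 1 ≤ J)
    (S : Finset (Fin d → ℝ)) (hScard : S.card = J) (hSΘ : ↑S ⊆ Θ)
    (g g₀ : Measure (Fin d → ℝ)) [IsProbabilityMeasure g] [IsProbabilityMeasure g₀]
    (hg : g Θᶜ = 0) (hg₀ : g₀ (↑S : Set (Fin d → ℝ))ᶜ = 0)
    (N : ℕ → ℝ)
    (hN : ∀ k, N k = sSup {y : ℝ | ∃ c : Fin d → ℝ, ∑ l, (c l) ^ 2 = 1 ∧
      y = |∑ i : Fin k → Fin d,
        (((∫ θ, ∏ j, (θ (i j) - θ₀ (i j)) ∂g) - ∫ θ, ∏ j, (θ (i j) - θ₀ (i j)) ∂g₀)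
          * ∏ j, c (i j))|})
    (Δ : ℝ)
    (hΔ : Δ = (Finset.Icc 1 (2 * J)).sup' (Finset.nonempty_Icc.mpr (by omega)) N)
    (k : ℕ) (hk : 2 * J < k) :
    N k ≤ (k : ℝ) * (M + 1) ^ (2 * J * k) * Δ := by
  let φ (c : Fin d → ℝ) (θ : Fin d → ℝ) : ℝ := ∑ l, (θ l - θ₀ l) * c l
  have hS : S.Nonempty := card_pos.1 (by omega)
  have hM : 0 ≤ M := (Real.sqrt_nonneg _).trans (hΘ _ (hSΘ hS.choose_spec))
  have hgΘ : ∀ᵐ θ ∂g, θ ∈ Θ := ae_iff.2 hg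
  have hg₀S : ∀ᵐ θ ∂g₀, θ ∈ S := ae_iff.2 hg₀
  have hg₀Θ : ∀ᵐ θ ∂g₀, θ ∈ Θ := hg₀S.mono fun θ hθ => hSΘ hθ
  have hmoment (n : ℕ) (c : Fin d → ℝ) :
      ∑ i : Fin n → Fin d, (((∫ θ, ∏ j, (θ (i j) - θ₀ (i j)) ∂g)
          - ∫ θ, ∏ j, (θ (i j) - θ₀ (i j)) ∂g₀) * ∏ j, c (i j))
        = moment (φ c) n g - moment (φ c) n g₀ := by
    simp_rw [sub_mul, sum_sub_distrib,
      sum_integral_centered_prod_mul_prod_eq_moment (hgΘ.mono fun θ => hΘ θ),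
      sum_integral_centered_prod_mul_prod_eq_moment (hg₀Θ.mono fun θ => hΘ θ)]
    rfl
  have hle_N {c} (hc : ∑ l, c l ^ 2 = 1) (n : ℕ) :
      |moment (φ c) n g - moment (φ c) n g₀| ≤ N n := by
    rw [hN n, ← hmoment]
    refine le_csSup ⟨2 * M ^ n, ?_⟩ ⟨c, hc, rfl⟩
    rintro _ ⟨c', hc', rfl⟩
    have hφ {θ} (hθ : θ ∈ Θ) : |φ c' θ| ≤ M := (abs_sum_mul_le_sqrt_sum_sq _ c' hc').trans (hΘ θ hθ)
    rw [hmoment, two_mul]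
    exact (abs_sub _ _).trans (add_le_add (abs_moment_le (hgΘ.mono fun θ => hφ) n)
      (abs_moment_le (hg₀Θ.mono fun θ => hφ) n))
  have hN_le_Δ (n : ℕ) (h1 : 1 ≤ n) (h2 : n ≤ 2 * J) : N n ≤ Δ :=
    hΔ ▸ le_sup' N (mem_Icc.2 ⟨h1, h2⟩)
  have hΔ0 : 0 ≤ Δ := by
    refine le_trans ?_ (hN_le_Δ 1 le_rfl (by omega))
    rw [hN 1]
    exact Real.sSup_nonneg fun _ ⟨_, _, hy⟩ => hy ▸ abs_nonneg _
  rw [hN k]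
  refine Real.sSup_le (fun _ ⟨c, hc, hy⟩ => ?_) (by positivity)
  rw [hy, hmoment]
  exact abs_moment_proj_sub_le hΘ hS hSΘ hScard.le hgΘ hg₀S hc
    (fun n h1 h2 => (hle_N hc n).trans (hN_le_Δ n h1 h2)) k (by omega)
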